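/- arXiv:1907.08360 — 2 statements merged into one kernel-verified Lean document; each statement's English description precedes it below -/
import Mathlib

section
/- Singular value soft-thresholding is the proximal operator of the nuclear norm: for any M ∈ ℝ^{n×L} and c ≥ 0, T_c(M) is the unique minimizer over B ∈ ℝ^{n×L} of (1/2)‖B − M‖_F² + c‖B‖_*. -/
open Matrix

/-- Squared Frobenius norm of a matrix. -/
noncomputable def frobSq {n L : ℕ} (M : Matrix (Fin n) (Fin L) ℝ) : ℝ :=
  ∑ i, ∑ j, (M i j) ^ 2

/-- Nuclear norm: sum of singular values, i.e. of square roots of the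
eigenvalues of BᵀB. -/
noncomputable def nuclearNorm {n L : ℕ} (B : Matrix (Fin n) (Fin L) ℝ) : ℝ :=
  ∑ j, Real.sqrt ((show (Bᵀ * B).IsHermitian by
    simpa using Matrix.isHermitian_conjTranspose_mul_self B).eigenvalues j)

/-- Rectangular diagonal matrix with entries σ₀, σ₁, … on the diagonal. -/
def rectDiag (n L : ℕ) (σ : ℕ → ℝ) : Matrix (Fin n) (Fin L) ℝ :=
  Matrix.of fun i j => if (i : ℕ) = (j : ℕ) then σ (i : ℕ) else 0

section SoftThreshAux

variable {m n L : ℕ}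

lemma real_star_mat (A : Matrix (Fin m) (Fin m) ℝ) : star A = Aᵀ := by
  rw [Matrix.star_eq_conjTranspose, Matrix.conjTranspose_eq_transpose_of_trivial]

lemma sum_sq_mulVec (U : Matrix (Fin m) (Fin m) ℝ) (hU : Uᵀ * U = 1) (x : Fin m → ℝ) :
    ∑ i, ((U *ᵥ x) i)^2 = ∑ i, (x i)^2 := by
  have h : (U *ᵥ x) ⬝ᵥ (U *ᵥ x) = x ⬝ᵥ x := by
    rw [dotProduct_mulVec, ← mulVec_transpose, mulVec_mulVec, hU, one_mulVec]
  simpa [dotProduct, pow_two] using h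

lemma spectral_real {A : Matrix (Fin m) (Fin m) ℝ} (hA : A.IsHermitian) :
    A = (hA.eigenvectorUnitary : Matrix (Fin m) (Fin m) ℝ) * diagonal hA.eigenvalues *
      (hA.eigenvectorUnitary : Matrix (Fin m) (Fin m) ℝ)ᵀ := by
  have := hA.spectral_theorem
  rwa [Unitary.conjStarAlgAut_apply, real_star_mat] at this

lemma unitary_real_tmul {A : Matrix (Fin m) (Fin m) ℝ} (hA : A.IsHermitian) :
    (hA.eigenvectorUnitary : Matrix (Fin m) (Fin m) ℝ)ᵀ *
      (hA.eigenvectorUnitary : Matrix (Fin m) (Fin m) ℝ) = 1 := by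
  have := (Matrix.mem_unitaryGroup_iff').mp hA.eigenvectorUnitary.2
  rwa [real_star_mat] at this

/-- Key duality bound: ⟨G,B⟩ ≤ κ‖B‖_* when the operator norm of `G` is at most `κ`. -/
lemma dual_bound (G B : Matrix (Fin n) (Fin L) ℝ) (κ : ℝ) (hκ : 0 ≤ κ)
    (hG : ∀ v : Fin L → ℝ, ∑ i, ((G *ᵥ v) i)^2 ≤ κ^2 * ∑ j, (v j)^2) :
    trace (Gᵀ * B) ≤ κ * nuclearNorm B := by
  set hA : (Bᵀ * B).IsHermitian := by simpa using Matrix.isHermitian_conjTranspose_mul_self B with hhA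
  set W : Matrix (Fin L) (Fin L) ℝ := (hA.eigenvectorUnitary : Matrix (Fin L) (Fin L) ℝ) with hWdef
  have hW1 : Wᵀ * W = 1 := unitary_real_tmul hA
  have hW2 : W * Wᵀ = 1 := by rw [mul_eq_one_comm]; exact hW1
  have hBB : Bᵀ * B = W * diagonal hA.eigenvalues * Wᵀ := by
    exact spectral_real hA
  set w : Fin L → (Fin L → ℝ) := fun j => W *ᵥ Pi.single j 1 with hwdef
  have hw1 : ∀ j, w j ⬝ᵥ w j = 1 := by
    intro j
    show (W *ᵥ Pi.single j 1) ⬝ᵥ (W *ᵥ Pi.single j 1) = 1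
    rw [dotProduct_mulVec, ← mulVec_transpose, mulVec_mulVec, hW1, one_mulVec]
    simp [dotProduct, Pi.single_apply]
  have hBw : ∀ j, (B *ᵥ w j) ⬝ᵥ (B *ᵥ w j) = hA.eigenvalues j := by
    intro j
    rw [dotProduct_mulVec, ← mulVec_transpose, mulVec_mulVec]
    have h1 : (W * diagonal hA.eigenvalues * Wᵀ) *ᵥ w j = hA.eigenvalues j • w j := by
      show (W * diagonal hA.eigenvalues * Wᵀ) *ᵥ (W *ᵥ Pi.single j 1) = _
      have hsingle : (Pi.single j (hA.eigenvalues j) : Fin L → ℝ)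
          = hA.eigenvalues j • (Pi.single j 1 : Fin L → ℝ) := by
        ext i; by_cases h : i = j <;> simp [Pi.single_apply, h]
      rw [mulVec_mulVec, Matrix.mul_assoc (W * diagonal hA.eigenvalues), hW1, Matrix.mul_one,
        ← mulVec_mulVec, diagonal_mulVec_single, mul_one, hsingle, mulVec_smul]
    rw [show (Bᵀ * B) *ᵥ w j = (W * diagonal hA.eigenvalues * Wᵀ) *ᵥ w j from
      congrArg (fun X => X *ᵥ w j) hBB, h1, smul_dotProduct, hw1, smul_eq_mul, mul_one]
  have key : trace (Gᵀ * B) = ∑ j, (G *ᵥ w j) ⬝ᵥ (B *ᵥ w j) := by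
    have h2 : trace (Wᵀ * (Gᵀ * B) * W) = trace (Gᵀ * B) := by
      rw [Matrix.trace_mul_cycle, hW2, Matrix.one_mul]
    rw [← h2, trace]
    apply Finset.sum_congr rfl
    intro j _
    have e1 : (Wᵀ * (Gᵀ * B) * W).diag j
        = Pi.single j 1 ⬝ᵥ ((Wᵀ * (Gᵀ * B) * W) *ᵥ Pi.single j 1) := by
      rw [mulVec_single, single_dotProduct]
      simp [Matrix.diag]
    rw [e1, ← mulVec_mulVec, ← mulVec_mulVec, dotProduct_mulVec, vecMul_transpose,
      ← mulVec_mulVec, dotProduct_mulVec, vecMul_transpose]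
  rw [key, nuclearNorm, Finset.mul_sum]
  apply Finset.sum_le_sum
  intro j _
  have ha : (G *ᵥ w j) ⬝ᵥ (G *ᵥ w j) ≤ κ^2 := by
    have hh := hG (w j)
    have hww : ∑ jj, (w j jj)^2 = 1 := by simpa [dotProduct, pow_two] using hw1 j
    rw [hww, mul_one] at hh
    simpa [dotProduct, pow_two] using hh
  have hb : (B *ᵥ w j) ⬝ᵥ (B *ᵥ w j) = hA.eigenvalues j := hBw j
  have hb0 : (0:ℝ) ≤ (B *ᵥ w j) ⬝ᵥ (B *ᵥ w j) :=
    Finset.sum_nonneg fun i _ => mul_self_nonneg _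
  have cs : ((G *ᵥ w j) ⬝ᵥ (B *ᵥ w j))^2
      ≤ ((G *ᵥ w j) ⬝ᵥ (G *ᵥ w j)) * ((B *ᵥ w j) ⬝ᵥ (B *ᵥ w j)) := by
    simpa [dotProduct, pow_two] using
      Finset.sum_mul_sq_le_sq_mul_sq Finset.univ (G *ᵥ w j) (B *ᵥ w j)
  calc (G *ᵥ w j) ⬝ᵥ (B *ᵥ w j) ≤ |(G *ᵥ w j) ⬝ᵥ (B *ᵥ w j)| := le_abs_self _
    _ = Real.sqrt (((G *ᵥ w j) ⬝ᵥ (B *ᵥ w j))^2) := (Real.sqrt_sq_eq_abs _).symm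
    _ ≤ Real.sqrt (κ^2 * ((B *ᵥ w j) ⬝ᵥ (B *ᵥ w j))) :=
        Real.sqrt_le_sqrt (le_trans cs (mul_le_mul_of_nonneg_right ha hb0))
    _ = κ * Real.sqrt (hA.eigenvalues j) := by
        rw [hb, Real.sqrt_mul (by positivity), Real.sqrt_sq hκ]

open scoped MatrixOrder

lemma trace_sqrt_diag {A : Matrix (Fin L) (Fin L) ℝ} (hA : PosSemidef A)
    (W : Matrix (Fin L) (Fin L) ℝ) (d : Fin L → ℝ)
    (hW : Wᵀ * W = 1) (hd : ∀ j, 0 ≤ d j)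
    (hAW : A = W * diagonal d * Wᵀ) :
    (CFC.sqrt A).trace = ∑ j, Real.sqrt (d j) := by
  set S := W * diagonal (fun j => Real.sqrt (d j)) * Wᵀ with hSdef
  have hSps : PosSemidef S := by
    have h1 : PosSemidef (diagonal (fun j => Real.sqrt (d j))) :=
      posSemidef_diagonal_iff.mpr fun j => Real.sqrt_nonneg _
    have h2 := h1.mul_mul_conjTranspose_same W
    rwa [Matrix.conjTranspose_eq_transpose_of_trivial] at h2
  have hDD : diagonal (fun j => Real.sqrt (d j)) * diagonal (fun j => Real.sqrt (d j))
      = diagonal d := by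
    have hfun : (fun j => Real.sqrt (d j) * Real.sqrt (d j)) = d :=
      funext fun j => Real.mul_self_sqrt (hd j)
    rw [diagonal_mul_diagonal, hfun]
  have hsq : S ^ 2 = A := by
    rw [hSdef, pow_two, hAW]
    rw [show (W * diagonal (fun j => Real.sqrt (d j)) * Wᵀ) *
          (W * diagonal (fun j => Real.sqrt (d j)) * Wᵀ)
        = W * (diagonal (fun j => Real.sqrt (d j)) * (Wᵀ * W *
            (diagonal (fun j => Real.sqrt (d j)) * Wᵀ))) from by
          simp only [Matrix.mul_assoc],
      hW, Matrix.one_mul, ← Matrix.mul_assoc (diagonal fun j => Real.sqrt (d j)), hDD,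
      ← Matrix.mul_assoc]
  have hS : S = CFC.sqrt A := (CFC.sqrt_unique (by rw [← pow_two]; exact hsq) hSps.nonneg).symm
  rw [← hS, hSdef, Matrix.trace_mul_cycle, hW, Matrix.one_mul, Matrix.trace_diagonal]

lemma eig_congr {A₁ A₂ : Matrix (Fin L) (Fin L) ℝ} (h : A₁ = A₂)
    (h1 : A₁.IsHermitian) (h2 : A₂.IsHermitian) : h1.eigenvalues = h2.eigenvalues := by
  subst h; rfl

lemma nuclear_eq_of_diag (B : Matrix (Fin n) (Fin L) ℝ)
    (V : Matrix (Fin L) (Fin L) ℝ) (d : Fin L → ℝ)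
    (hV : Vᵀ * V = 1) (hd : ∀ j, 0 ≤ d j)
    (hBB : Bᵀ * B = V * diagonal d * Vᵀ) :
    nuclearNorm B = ∑ j, Real.sqrt (d j) := by
  have hPSD : PosSemidef (Bᵀ * B) := by
    have := Matrix.posSemidef_conjTranspose_mul_self B
    rwa [Matrix.conjTranspose_eq_transpose_of_trivial] at this
  have hA : (Bᵀ * B).IsHermitian := hPSD.1
  have h1 : (CFC.sqrt (Bᵀ * B)).trace = ∑ j, Real.sqrt (hA.eigenvalues j) :=
    trace_sqrt_diag hPSD _ _ (unitary_real_tmul hA) (hPSD.eigenvalues_nonneg)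
      (spectral_real hA)
  have h2 : (CFC.sqrt (Bᵀ * B)).trace = ∑ j, Real.sqrt (d j) :=
    trace_sqrt_diag hPSD V d hV hd hBB
  have h3 : ∀ j, (show (Bᵀ * B).IsHermitian by
      simpa using Matrix.isHermitian_conjTranspose_mul_self B).eigenvalues j
      = hA.eigenvalues j := by
    intro j
    exact congrFun (eig_congr rfl
      (show (Bᵀ * B).IsHermitian by
        simpa using Matrix.isHermitian_conjTranspose_mul_self B) hA) j
  calc nuclearNorm B
      = ∑ j, Real.sqrt (hA.eigenvalues j) := by
        rw [nuclearNorm]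
    _ = ∑ j, Real.sqrt (d j) := by rw [← h1, h2]

lemma rectDiag_tmul (a b : ℕ → ℝ) :
    (rectDiag n L a)ᵀ * rectDiag n L b
      = diagonal (fun j : Fin L => if (j:ℕ) < n then a (j:ℕ) * b (j:ℕ) else 0) := by
  ext j k
  simp only [mul_apply, transpose_apply, rectDiag, of_apply, diagonal_apply]
  by_cases hjk : j = k
  · subst hjk
    rw [if_pos rfl]
    by_cases hj : (j:ℕ) < n
    · rw [if_pos hj, Finset.sum_eq_single (⟨(j:ℕ), hj⟩ : Fin n)]
      · simp
      · intro i _ hij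
        have h2 : (i:ℕ) ≠ (j:ℕ) := fun h => hij (Fin.ext h)
        simp [h2]
      · intro h; exact absurd (Finset.mem_univ _) h
    · rw [if_neg hj]
      apply Finset.sum_eq_zero
      intro i _
      have h2 : (i:ℕ) ≠ (j:ℕ) := fun h => hj (h ▸ i.isLt)
      simp [h2]
  · rw [if_neg hjk]
    apply Finset.sum_eq_zero
    intro i _
    by_cases h1 : (i:ℕ) = (j:ℕ)
    · have h2 : (i:ℕ) ≠ (k:ℕ) := by
        intro h2
        exact hjk (Fin.ext (h1.symm.trans h2))
      simp [h2]
    · simp [h1]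

lemma rectDiag_sub (a b : ℕ → ℝ) :
    rectDiag n L a - rectDiag n L b = rectDiag n L (fun i => a i - b i) := by
  ext i j
  simp only [Matrix.sub_apply, rectDiag, of_apply]
  split <;> simp

lemma sandwich (U : Matrix (Fin n) (Fin n) ℝ) (V : Matrix (Fin L) (Fin L) ℝ)
    (hU : Uᵀ * U = 1) (a b : ℕ → ℝ) :
    (U * rectDiag n L a * Vᵀ)ᵀ * (U * rectDiag n L b * Vᵀ)
      = V * diagonal (fun j : Fin L => if (j:ℕ) < n then a (j:ℕ) * b (j:ℕ) else 0) * Vᵀ := by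
  rw [Matrix.transpose_mul, Matrix.transpose_mul, Matrix.transpose_transpose]
  rw [show V * ((rectDiag n L a)ᵀ * Uᵀ) * (U * rectDiag n L b * Vᵀ)
      = V * ((rectDiag n L a)ᵀ * ((Uᵀ * U) * (rectDiag n L b * Vᵀ))) from by
    simp only [Matrix.mul_assoc], hU, Matrix.one_mul,
    ← Matrix.mul_assoc ((rectDiag n L a)ᵀ) (rectDiag n L b) Vᵀ, rectDiag_tmul,
    ← Matrix.mul_assoc]

lemma trace_transpose_mul' (X Y : Matrix (Fin n) (Fin L) ℝ) :
    trace (Xᵀ * Y) = ∑ i, ∑ j, X i j * Y i j := by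
  rw [Matrix.trace]
  simp only [Matrix.diag, mul_apply, transpose_apply]
  rw [Finset.sum_comm]

lemma frobSq_expand (X Y : Matrix (Fin n) (Fin L) ℝ) :
    frobSq (X + Y) = frobSq X + 2 * (∑ i, ∑ j, X i j * Y i j) + frobSq Y := by
  have h : ∀ i j, ((X + Y) i j)^2 = (X i j)^2 + (2*(X i j * Y i j) + (Y i j)^2) := by
    intro i j; simp only [Matrix.add_apply]; ring
  simp_rw [frobSq, h, Finset.sum_add_distrib, Finset.mul_sum]
  ring

lemma op_bound (Vm : Matrix (Fin L) (Fin L) ℝ) (hV' : Vm * Vmᵀ = 1)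
    (H : Matrix (Fin n) (Fin L) ℝ) (e : Fin L → ℝ) (κ : ℝ)
    (hHH : Hᵀ * H = Vm * diagonal e * Vmᵀ) (he : ∀ j, e j ≤ κ^2)
    (v : Fin L → ℝ) : ∑ i, ((H *ᵥ v) i)^2 ≤ κ^2 * ∑ j, (v j)^2 := by
  have h0 : ∑ i, ((H *ᵥ v) i)^2 = (H *ᵥ v) ⬝ᵥ (H *ᵥ v) := by
    simp [dotProduct, pow_two]
  have h1 : (H *ᵥ v) ⬝ᵥ (H *ᵥ v) = ((Hᵀ * H) *ᵥ v) ⬝ᵥ v := by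
    rw [dotProduct_mulVec, ← mulVec_transpose, mulVec_mulVec, dotProduct_comm]
  set u := Vmᵀ *ᵥ v with hu
  have h2 : ((Hᵀ * H) *ᵥ v) ⬝ᵥ v = (diagonal e *ᵥ u) ⬝ᵥ u := by
    rw [hHH, ← mulVec_mulVec, ← mulVec_mulVec, dotProduct_comm, dotProduct_mulVec,
      ← mulVec_transpose, dotProduct_comm]
  have h3 : (diagonal e *ᵥ u) ⬝ᵥ u = ∑ j, e j * (u j)^2 := by
    simp [dotProduct, mulVec_diagonal, pow_two, mul_assoc]
  have h4 : ∑ j, (u j)^2 = ∑ j, (v j)^2 := by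
    have hh : (Vmᵀ)ᵀ * Vmᵀ = 1 := by rwa [Matrix.transpose_transpose]
    exact sum_sq_mulVec Vmᵀ hh v
  rw [h0, h1, h2, h3, ← h4, Finset.mul_sum]
  apply Finset.sum_le_sum
  intro j _
  exact mul_le_mul_of_nonneg_right (he j) (sq_nonneg _)

lemma frobSq_eq_zero {X : Matrix (Fin n) (Fin L) ℝ} (h : frobSq X = 0) : X = 0 := by
  ext i j
  have h1 : ∀ i ∈ Finset.univ, (0:ℝ) ≤ ∑ j, (X i j)^2 :=
    fun _ _ => Finset.sum_nonneg fun _ _ => sq_nonneg _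
  have h2 := (Finset.sum_eq_zero_iff_of_nonneg h1).mp h i (Finset.mem_univ i)
  have h3 := (Finset.sum_eq_zero_iff_of_nonneg
    (fun _ _ => sq_nonneg (X i _))).mp h2 j (Finset.mem_univ j)
  simpa using sq_eq_zero_iff.mp h3

end SoftThreshAux

/-- Singular value soft-thresholding T_c(M) is the proximal operator of the
nuclear norm: the unique minimizer of (1/2)‖B − M‖_F² + c‖B‖_*. -/
theorem soft_thresholding_is_prox_of_nuclear_norm
    (n L : ℕ) (M : Matrix (Fin n) (Fin L) ℝ)
    (U : Matrix (Fin n) (Fin n) ℝ) (V : Matrix (Fin L) (Fin L) ℝ) (σ : ℕ → ℝ)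
    (hU : Uᵀ * U = 1) (hU' : U * Uᵀ = 1) (hV : Vᵀ * V = 1) (hV' : V * Vᵀ = 1)
    (hσ : ∀ i, 0 ≤ σ i) (hM : M = U * rectDiag n L σ * Vᵀ)
    (c : ℝ) (hc : 0 ≤ c)
    (T : Matrix (Fin n) (Fin L) ℝ)
    (hT : T = U * rectDiag n L (fun i => max (σ i - c) 0) * Vᵀ) :
    ∀ B : Matrix (Fin n) (Fin L) ℝ,
      (1 / 2) * frobSq (T - M) + c * nuclearNorm T ≤
        (1 / 2) * frobSq (B - M) + c * nuclearNorm B ∧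
      ((1 / 2) * frobSq (B - M) + c * nuclearNorm B =
        (1 / 2) * frobSq (T - M) + c * nuclearNorm T → B = T) := by
  intro B
  set τ : ℕ → ℝ := fun i => max (σ i - c) 0 with hτdef
  have hτ0 : ∀ i, 0 ≤ τ i := fun i => le_max_right _ _
  set h : ℕ → ℝ := fun i => σ i - τ i with hhdef
  have hh0 : ∀ i, 0 ≤ h i := by
    intro i
    simp only [hhdef, hτdef]
    rcases le_or_gt (σ i) c with hle | hlt
    · rw [max_eq_right (by linarith)]; simpa using hσ i
    · rw [max_eq_left (by linarith)]; linarith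
  have hhc : ∀ i, h i ≤ c := by
    intro i
    simp only [hhdef, hτdef]
    rcases le_or_gt (σ i) c with hle | hlt
    · rw [max_eq_right (by linarith)]; linarith
    · rw [max_eq_left (by linarith)]; linarith
  have hhτ : ∀ i, h i * τ i = c * τ i := by
    intro i
    simp only [hhdef, hτdef]
    rcases le_or_gt (σ i) c with hle | hlt
    · rw [max_eq_right (by linarith)]; ring
    · rw [max_eq_left (by linarith)]; ring
  set H := M - T with hHdef
  have hMT : H = U * rectDiag n L h * Vᵀ := by
    rw [hHdef, hM, hT, ← Matrix.sub_mul, ← Matrix.mul_sub, rectDiag_sub]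
  have hHH : Hᵀ * H
      = V * diagonal (fun j : Fin L => if (j:ℕ) < n then h (j:ℕ) * h (j:ℕ) else 0) * Vᵀ := by
    rw [hMT]; exact sandwich U V hU h h
  have hTT : Tᵀ * T
      = V * diagonal (fun j : Fin L => if (j:ℕ) < n then τ (j:ℕ) * τ (j:ℕ) else 0) * Vᵀ := by
    rw [hT]; exact sandwich U V hU τ τ
  have hHT : Hᵀ * T
      = V * diagonal (fun j : Fin L => if (j:ℕ) < n then h (j:ℕ) * τ (j:ℕ) else 0) * Vᵀ := by
    rw [hMT, hT]; exact sandwich U V hU h τ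
  have hNT : nuclearNorm T = ∑ j : Fin L, (if (j:ℕ) < n then τ (j:ℕ) else 0) := by
    rw [nuclear_eq_of_diag T V _ hV (fun j => by
      by_cases hj : (j:ℕ) < n
      · rw [if_pos hj]; exact mul_self_nonneg _
      · rw [if_neg hj]) hTT]
    apply Finset.sum_congr rfl
    intro j _
    split
    · exact Real.sqrt_mul_self (hτ0 _)
    · exact Real.sqrt_zero
  have key1 : trace (Hᵀ * B) ≤ c * nuclearNorm B := by
    apply dual_bound H B c hc
    intro v
    apply op_bound V hV' H _ c hHH _ v
    intro j
    split
    · calc h (j:ℕ) * h (j:ℕ) ≤ c * c := mul_le_mul (hhc _) (hhc _) (hh0 _) hc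
        _ = c^2 := (pow_two c).symm
    · positivity
  have key2 : trace (Hᵀ * T) = c * nuclearNorm T := by
    rw [hHT, Matrix.trace_mul_cycle, hV, Matrix.one_mul, Matrix.trace_diagonal, hNT,
      Finset.mul_sum]
    apply Finset.sum_congr rfl
    intro j _
    split
    · exact hhτ _
    · rw [mul_zero]
  have e1 : frobSq (B - M)
      = frobSq (B - T) + 2 * (∑ i, ∑ j, (B - T) i j * (T - M) i j) + frobSq (T - M) := by
    have hBM : B - M = (B - T) + (T - M) := by abel
    rw [hBM]
    exact frobSq_expand (B - T) (T - M)
  have e2 : ∑ i, ∑ j, (B - T) i j * (T - M) i j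
      = (∑ i, ∑ j, H i j * T i j) - (∑ i, ∑ j, H i j * B i j) := by
    rw [← Finset.sum_sub_distrib]
    apply Finset.sum_congr rfl
    intro i _
    rw [← Finset.sum_sub_distrib]
    apply Finset.sum_congr rfl
    intro j _
    simp only [hHdef, Matrix.sub_apply]
    ring
  have e3 : ∑ i, ∑ j, H i j * T i j = trace (Hᵀ * T) := (trace_transpose_mul' H T).symm
  have e4 : ∑ i, ∑ j, H i j * B i j = trace (Hᵀ * B) := (trace_transpose_mul' H B).symm
  have hnn : 0 ≤ frobSq (B - T) :=
    Finset.sum_nonneg fun _ _ => Finset.sum_nonneg fun _ _ => sq_nonneg _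
  constructor
  · linarith [key1, key2, e1, e2, e3, e4, hnn]
  · intro heq
    have hz : frobSq (B - T) = 0 := by
      apply le_antisymm _ hnn
      linarith [key1, key2, e1, e2, e3, e4]
    have hBT : B - T = 0 := frobSq_eq_zero hz
    exact sub_eq_zero.mp hBT
end

section
/- Let B ∈ ℝ^{n×L} minimize f(B) = ‖W − B‖_F² + τ₂(α‖B‖_* + (1−α)‖B‖_F²) over all of ℝ^{n×L}, where W = P^⊥ Z for an orthogonal projection P^⊥ onto the orthogonal complement of the column space of X (i.e., X^T W = 0). Then the unconstrained minimizer B̂ automatically satisfies X^T B̂ = 0; i.e., extending the search domain from {B : X^T B = 0} to ℝ^{n×L} does not change the solution. -/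
open Matrix

/-! ### Auxiliary trace / positive-semidefinite lemmas -/

lemma myTraceNonneg {n : ℕ} {M : Matrix (Fin n) (Fin n) ℝ} (h : M.PosSemidef) :
    0 ≤ M.trace := by
  have : ∀ i, 0 ≤ M i i := by
    intro i
    exact h.diag_nonneg
  exact Finset.sum_nonneg fun i _ => this i

/-- square root of a positive semidefinite real matrix (old Mathlib definition) -/
noncomputable def Matrix.PosSemidef.sqrt {m : Type*} [Fintype m] [DecidableEq m]
    {A : Matrix m m ℝ} (hA : A.PosSemidef) : Matrix m m ℝ :=
  (hA.1.eigenvectorUnitary : Matrix m m ℝ) * diagonal (fun i => Real.sqrt (hA.1.eigenvalues i)) *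
    (star hA.1.eigenvectorUnitary : Matrix m m ℝ)

lemma Matrix.PosSemidef.posSemidef_sqrt {m : Type*} [Fintype m] [DecidableEq m]
    {A : Matrix m m ℝ} (hA : A.PosSemidef) : hA.sqrt.PosSemidef := by
  unfold Matrix.PosSemidef.sqrt
  have hD : (diagonal fun i => Real.sqrt (hA.1.eigenvalues i)).PosSemidef :=
    PosSemidef.diagonal (fun i => Real.sqrt_nonneg _)
  have := hD.mul_mul_conjTranspose_same (hA.1.eigenvectorUnitary : Matrix m m ℝ)
  rw [Matrix.star_eq_conjTranspose]
  exact this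

lemma Matrix.PosSemidef.sqrt_mul_self {m : Type*} [Fintype m] [DecidableEq m]
    {A : Matrix m m ℝ} (hA : A.PosSemidef) : hA.sqrt * hA.sqrt = A := by
  unfold Matrix.PosSemidef.sqrt
  conv_rhs => rw [hA.1.spectral_theorem]
  rw [Unitary.conjStarAlgAut_apply]
  have hU := Unitary.coe_star_mul_self hA.1.eigenvectorUnitary
  simp only [Matrix.mul_assoc]
  rw [← Matrix.mul_assoc (star hA.1.eigenvectorUnitary : Matrix m m ℝ), hU, Matrix.one_mul,
    ← Matrix.mul_assoc (diagonal _) (diagonal _), diagonal_mul_diagonal]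
  congr 3
  funext i
  simp [Real.mul_self_sqrt (hA.eigenvalues_nonneg i)]

lemma myPsdFactor {m : Type*} [Fintype m] [DecidableEq m] {N : Matrix m m ℝ}
    (hN : N.PosSemidef) : ∃ C : Matrix m m ℝ, N = Cᴴ * C :=
  ⟨hN.sqrt, by rw [hN.posSemidef_sqrt.1.eq, hN.sqrt_mul_self]⟩

lemma myTraceMulNonneg {n : ℕ} {M N : Matrix (Fin n) (Fin n) ℝ}
    (hM : M.PosSemidef) (hN : N.PosSemidef) : 0 ≤ (M * N).trace := by
  obtain ⟨C, hC⟩ := myPsdFactor hN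
  rw [hC, Matrix.conjTranspose_eq_transpose_of_trivial, ← Matrix.mul_assoc,
    Matrix.trace_mul_cycle]
  have h2 : (C * M * Cᵀ).PosSemidef := by
    have := hM.mul_mul_conjTranspose_same C
    rwa [Matrix.conjTranspose_eq_transpose_of_trivial] at this
  exact myTraceNonneg h2

lemma myTraceSqrt {n : ℕ} {A : Matrix (Fin n) (Fin n) ℝ} (hA : A.PosSemidef) :
    hA.sqrt.trace = ∑ i, Real.sqrt (hA.1.eigenvalues i) := by
  rw [Matrix.PosSemidef.sqrt, Matrix.trace_mul_comm, ← Matrix.mul_assoc]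
  rw [Unitary.coe_star_mul_self, Matrix.one_mul, Matrix.trace_diagonal]

/-- Monotonicity of `trace ∘ sqrt` with respect to the Loewner order. -/
lemma myTraceSqrtMono {n : ℕ} {A B : Matrix (Fin n) (Fin n) ℝ}
    (hA : A.PosSemidef) (hB : B.PosSemidef) (hAB : (B - A).PosSemidef) :
    hA.sqrt.trace ≤ hB.sqrt.trace := by
  set R := hA.sqrt with hRdef
  set S := hB.sqrt with hSdef
  have key : ∀ ε : ℝ, 0 < ε → R.trace ≤ S.trace + ε * n / 2 := by
    intro ε hε
    set D : Matrix (Fin n) (Fin n) ℝ := Matrix.diagonal (fun _ => ε) with hDdef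
    have hD : D.PosDef := Matrix.PosDef.diagonal (fun _ => hε)
    set T := S + D with hTdef
    have hT : T.PosDef := Matrix.PosDef.posSemidef_add hB.posSemidef_sqrt hD
    have hTinv : T⁻¹.PosDef := hT.inv
    have hdet : IsUnit T.det := isUnit_iff_ne_zero.mpr hT.det_pos.ne'
    have hTT : T * T⁻¹ = 1 := Matrix.mul_nonsing_inv _ hdet
    have hT1 : T⁻¹ * T = 1 := Matrix.nonsing_inv_mul _ hdet
    have hR2 : R * R = A := hA.sqrt_mul_self
    have hS2 : S * S = B := hB.sqrt_mul_self
    have hRh : R.IsHermitian := hA.posSemidef_sqrt.1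
    have hTh : T.IsHermitian := hT.isHermitian
    have hsq : ((R - T) * (R - T)).PosSemidef := by
      have h1 := Matrix.posSemidef_conjTranspose_mul_self (R - T)
      rwa [(hRh.sub hTh).eq] at h1
    have h0 : 0 ≤ (T⁻¹ * ((R - T) * (R - T))).trace :=
      myTraceMulNonneg hTinv.posSemidef hsq
    have expand : T⁻¹ * ((R - T) * (R - T)) =
        T⁻¹ * A - T⁻¹ * R * T - (T⁻¹ * T) * R + (T⁻¹ * T) * T := by
      rw [← hR2]; noncomm_ring
    have htrRT : (T⁻¹ * R * T).trace = R.trace := by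
      rw [Matrix.trace_mul_cycle, hTT, Matrix.one_mul]
    have step1 : 2 * R.trace ≤ (T⁻¹ * A).trace + T.trace := by
      rw [expand] at h0
      rw [hT1] at h0
      simp only [Matrix.trace_add, Matrix.trace_sub, Matrix.one_mul, htrRT] at h0
      linarith
    have step2 : (T⁻¹ * A).trace ≤ (T⁻¹ * B).trace := by
      have := myTraceMulNonneg hTinv.posSemidef hAB
      rw [Matrix.mul_sub, Matrix.trace_sub] at this
      linarith
    have step3 : (T⁻¹ * B).trace ≤ S.trace := by
      have hTS : T⁻¹ * B = S - ε • (T⁻¹ * S) := by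
        have : B = T * S - ε • S := by
          rw [hTdef, Matrix.add_mul, hS2, hDdef, ← Matrix.smul_eq_diagonal_mul]
          abel
        rw [this, Matrix.mul_sub, ← Matrix.mul_assoc, hT1, Matrix.one_mul,
          Matrix.mul_smul]
      have hpos : 0 ≤ (T⁻¹ * S).trace :=
        myTraceMulNonneg hTinv.posSemidef hB.posSemidef_sqrt
      rw [hTS, Matrix.trace_sub, Matrix.trace_smul, smul_eq_mul]
      nlinarith
    have step4 : T.trace = S.trace + ε * n := by
      rw [hTdef, Matrix.trace_add, hDdef, Matrix.trace_diagonal]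
      simp [mul_comm]
    linarith
  by_contra hcon
  push_neg at hcon
  set δ := R.trace - S.trace with hδ
  have hδpos : 0 < δ := by simp [hδ]; linarith
  have := key (δ / (n + 1)) (by positivity)
  have hfrac : δ / (n + 1) * n / 2 < δ := by
    rw [div_mul_eq_mul_div, div_div]
    apply (div_lt_iff₀ (by positivity)).mpr
    nlinarith [hδpos]
  linarith

/-! ### Nuclear norm lemmas -/

lemma psdBtB {n L : ℕ} (B : Matrix (Fin n) (Fin L) ℝ) : (Bᵀ * B).PosSemidef := by
  have := Matrix.posSemidef_conjTranspose_mul_self B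
  rwa [Matrix.conjTranspose_eq_transpose_of_trivial] at this

lemma myNuclearEq {n L : ℕ} (B : Matrix (Fin n) (Fin L) ℝ) :
    nuclearNorm B = (psdBtB B).sqrt.trace := by
  rw [myTraceSqrt]; rfl

lemma symm_of_idem {n : ℕ} {P : Matrix (Fin n) (Fin n) ℝ} (hP : Pᵀ * P = P) : Pᵀ = P := by
  conv_lhs => rw [← hP]
  rw [Matrix.transpose_mul, Matrix.transpose_transpose, hP]

lemma myNuclearMono {n L : ℕ} (P : Matrix (Fin n) (Fin n) ℝ)
    (B : Matrix (Fin n) (Fin L) ℝ) (hP : Pᵀ * P = P) :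
    nuclearNorm (P * B) ≤ nuclearNorm B := by
  have hPs : Pᵀ = P := symm_of_idem hP
  have hM : (P * B)ᵀ * (P * B) = Bᵀ * (P * B) := by
    rw [Matrix.transpose_mul, Matrix.mul_assoc, ← Matrix.mul_assoc Pᵀ, hP]
  have h1 : (P * B)ᵀ * B = Bᵀ * (P * B) := by
    rw [Matrix.transpose_mul, hPs, Matrix.mul_assoc]
  have hdiff : Bᵀ * B - (P * B)ᵀ * (P * B) = (B - P * B)ᵀ * (B - P * B) := by
    rw [Matrix.transpose_sub, Matrix.sub_mul, Matrix.mul_sub, Matrix.mul_sub, hM, h1]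
    abel
  have hpsd : (Bᵀ * B - (P * B)ᵀ * (P * B)).PosSemidef := hdiff ▸ psdBtB (B - P * B)
  rw [myNuclearEq, myNuclearEq]
  exact myTraceSqrtMono (psdBtB (P * B)) (psdBtB B) hpsd

/-! ### Frobenius norm lemmas -/

lemma myFrobTrace {n L : ℕ} (M : Matrix (Fin n) (Fin L) ℝ) :
    frobSq M = (Mᵀ * M).trace := by
  simp only [frobSq, Matrix.trace, Matrix.diag, Matrix.mul_apply, Matrix.transpose_apply, sq]
  exact Finset.sum_comm

lemma myFrobNonneg {n L : ℕ} (M : Matrix (Fin n) (Fin L) ℝ) : 0 ≤ frobSq M :=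
  Finset.sum_nonneg fun i _ => Finset.sum_nonneg fun j _ => sq_nonneg _

lemma myFrobZero {n L : ℕ} {M : Matrix (Fin n) (Fin L) ℝ} (h : frobSq M ≤ 0) : M = 0 := by
  have h0 : frobSq M = 0 := le_antisymm h (myFrobNonneg M)
  ext i j
  have := (Finset.sum_eq_zero_iff_of_nonneg (fun i _ => Finset.sum_nonneg
    fun j _ => sq_nonneg (M i j))).mp h0 i (Finset.mem_univ i)
  have := (Finset.sum_eq_zero_iff_of_nonneg (fun j _ => sq_nonneg (M i j))).mp
    this j (Finset.mem_univ j)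
  simpa using pow_eq_zero_iff (n := 2) (by norm_num) |>.mp this

lemma myFrobDecomp {n L : ℕ} (P : Matrix (Fin n) (Fin n) ℝ)
    (M : Matrix (Fin n) (Fin L) ℝ) (hP : Pᵀ * P = P) :
    frobSq M = frobSq (P * M) + frobSq (M - P * M) := by
  have hPs : Pᵀ = P := symm_of_idem hP
  have hM : (P * M)ᵀ * (P * M) = Mᵀ * (P * M) := by
    rw [Matrix.transpose_mul, Matrix.mul_assoc, ← Matrix.mul_assoc Pᵀ, hP]
  have h1 : (P * M)ᵀ * M = Mᵀ * (P * M) := by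
    rw [Matrix.transpose_mul, hPs, Matrix.mul_assoc]
  rw [myFrobTrace, myFrobTrace, myFrobTrace, hM, Matrix.transpose_sub,
    Matrix.sub_mul, Matrix.mul_sub, Matrix.mul_sub, hM, h1]
  simp only [Matrix.trace_sub, Matrix.trace_add]
  ring

/-! ### The orthogonal projection onto `ker Xᵀ` as a matrix -/

/-- kernel of `Xᵀ` as a submodule of Euclidean space -/
noncomputable def kerXt {n d : ℕ} (X : Matrix (Fin n) (Fin d) ℝ) :
    Submodule ℝ (EuclideanSpace ℝ (Fin n)) :=
  LinearMap.ker ((Matrix.mulVecLin Xᵀ).comp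
    (WithLp.linearEquiv 2 ℝ (Fin n → ℝ)).toLinearMap)

/-- projection onto `kerXt X` as a plain linear map on `Fin n → ℝ` -/
noncomputable def pmap {n d : ℕ} (X : Matrix (Fin n) (Fin d) ℝ) :
    (Fin n → ℝ) →ₗ[ℝ] (Fin n → ℝ) :=
  (WithLp.linearEquiv 2 ℝ (Fin n → ℝ)).toLinearMap ∘ₗ
    ((kerXt X).subtype ∘ₗ (Submodule.orthogonalProjection (kerXt X)).toLinearMap) ∘ₗ
      (WithLp.linearEquiv 2 ℝ (Fin n → ℝ)).symm.toLinearMap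

noncomputable def Pmat {n d : ℕ} (X : Matrix (Fin n) (Fin d) ℝ) : Matrix (Fin n) (Fin n) ℝ :=
  LinearMap.toMatrix' (pmap X)

variable {n d : ℕ}

lemma Pmat_mulVec (X : Matrix (Fin n) (Fin d) ℝ) (v : Fin n → ℝ) :
    Pmat X *ᵥ v = pmap X v := by
  rw [← Matrix.toLin'_apply, Pmat, Matrix.toLin'_toMatrix']

lemma pmap_mem (X : Matrix (Fin n) (Fin d) ℝ) (v : Fin n → ℝ) :
    Xᵀ *ᵥ (pmap X v) = 0 := by
  have hmem : ((Submodule.orthogonalProjection (kerXt X)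
      ((WithLp.linearEquiv 2 ℝ (Fin n → ℝ)).symm v) : EuclideanSpace ℝ (Fin n))) ∈ kerXt X :=
    SetLike.coe_mem _
  simp [kerXt, LinearMap.mem_ker, Matrix.mulVec_transpose] at hmem
  simp [pmap, Matrix.mulVec_transpose]
  exact hmem

lemma pmap_fix (X : Matrix (Fin n) (Fin d) ℝ) (v : Fin n → ℝ) (hv : Xᵀ *ᵥ v = 0) :
    pmap X v = v := by
  have hvmem : ((WithLp.linearEquiv 2 ℝ (Fin n → ℝ)).symm v) ∈ kerXt X := by
    simp [kerXt, LinearMap.mem_ker, ← Matrix.mulVec_transpose, hv]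
  simp only [pmap, LinearMap.coe_comp, Function.comp_apply, LinearEquiv.coe_coe,
    Submodule.coe_subtype, ContinuousLinearMap.coe_coe]
  rw [← Submodule.starProjection_apply, Submodule.starProjection_eq_self_iff.mpr hvmem]
  simp

lemma myExtMulVec {m k : ℕ} {A B : Matrix (Fin m) (Fin k) ℝ}
    (h : ∀ v, A *ᵥ v = B *ᵥ v) : A = B := by
  ext i j
  have := congrFun (h (Pi.single j 1)) i
  simpa [Matrix.mulVec_single] using this

lemma Pmat_idem (X : Matrix (Fin n) (Fin d) ℝ) : Pmat X * Pmat X = Pmat X := by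
  apply myExtMulVec
  intro v
  rw [← Matrix.mulVec_mulVec, Pmat_mulVec, Pmat_mulVec,
    pmap_fix X _ (pmap_mem X v)]

lemma Pmat_kills (X : Matrix (Fin n) (Fin d) ℝ) : Xᵀ * Pmat X = 0 := by
  apply myExtMulVec
  intro v
  rw [← Matrix.mulVec_mulVec, Pmat_mulVec, pmap_mem, Matrix.zero_mulVec]

lemma Pmat_fixes {L : ℕ} (X : Matrix (Fin n) (Fin d) ℝ) (W : Matrix (Fin n) (Fin L) ℝ)
    (hW : Xᵀ * W = 0) : Pmat X * W = W := by
  apply myExtMulVec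
  intro v
  rw [← Matrix.mulVec_mulVec, Pmat_mulVec, pmap_fix]
  rw [Matrix.mulVec_mulVec, hW, Matrix.zero_mulVec]

lemma Pmat_symm (X : Matrix (Fin n) (Fin d) ℝ) : (Pmat X)ᵀ = Pmat X := by
  have e1 : ∀ i j, Pmat X i j = pmap X (Pi.single j 1) i := by
    intro i j
    rw [← Pmat_mulVec]
    simp [Matrix.mulVec_single]
  ext i j
  rw [Matrix.transpose_apply, e1, e1]
  have h := Submodule.inner_starProjection_left_eq_right (kerXt X)
    (EuclideanSpace.single j (1:ℝ)) (EuclideanSpace.single i (1:ℝ))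
  rw [EuclideanSpace.inner_single_right, EuclideanSpace.inner_single_left] at h
  simp only [_root_.map_one, one_mul, conj_trivial] at h
  simp only [pmap, LinearMap.coe_comp, Function.comp_apply, LinearEquiv.coe_coe,
    Submodule.coe_subtype, ContinuousLinearMap.coe_coe]
  have hsingle : ∀ k : Fin n, (WithLp.linearEquiv 2 ℝ (Fin n → ℝ)).symm (Pi.single k 1)
      = EuclideanSpace.single k (1:ℝ) := fun k => rfl
  rw [hsingle, hsingle, ← Submodule.starProjection_apply, ← Submodule.starProjection_apply]
  simpa [WithLp.linearEquiv_apply] using h.symm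

/-- Extending the search domain does not change the solution: if W = P⊥Z lies
in the orthogonal complement of the column space of X (i.e. XᵀW = 0) and B̂
minimizes ‖W − B‖_F² + τ₂(α‖B‖_* + (1−α)‖B‖_F²) over all of ℝ^{n×L}, then B̂
automatically satisfies XᵀB̂ = 0. -/
theorem unconstrained_minimizer_satisfies_constraint
    (n d L : ℕ) (X : Matrix (Fin n) (Fin d) ℝ)
    (W : Matrix (Fin n) (Fin L) ℝ) (hW : Xᵀ * W = 0)
    (τ₂ α : ℝ) (hτ₂ : 0 < τ₂) (hα : 0 ≤ α ∧ α ≤ 1)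
    (Bh : Matrix (Fin n) (Fin L) ℝ)
    (hmin : ∀ B : Matrix (Fin n) (Fin L) ℝ,
      frobSq (W - Bh) + τ₂ * (α * nuclearNorm Bh + (1 - α) * frobSq Bh) ≤
        frobSq (W - B) + τ₂ * (α * nuclearNorm B + (1 - α) * frobSq B)) :
    Xᵀ * Bh = 0 := by
  obtain ⟨hα0, hα1⟩ := hα
  set P := Pmat X with hPdef
  have hP : Pᵀ * P = P := by rw [Pmat_symm, Pmat_idem]
  have hPW : P * W = W := Pmat_fixes X W hW
  -- decompositions
  have hd1 : frobSq (W - Bh) = frobSq (W - P * Bh) + frobSq (Bh - P * Bh) := by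
    have := myFrobDecomp P (W - Bh) hP
    rw [Matrix.mul_sub, hPW] at this
    have h2 : (W - Bh) - (W - P * Bh) = -(Bh - P * Bh) := by abel
    rw [h2] at this
    have h3 : frobSq (-(Bh - P * Bh)) = frobSq (Bh - P * Bh) := by
      simp only [frobSq, Matrix.neg_apply, Matrix.sub_apply, neg_sub]
      exact Finset.sum_congr rfl fun i _ => Finset.sum_congr rfl fun j _ => by ring
    rwa [h3] at this
  have hd2 : frobSq Bh = frobSq (P * Bh) + frobSq (Bh - P * Bh) := myFrobDecomp P Bh hP
  have hnuc : nuclearNorm (P * Bh) ≤ nuclearNorm Bh := myNuclearMono P Bh hP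
  have hfn : 0 ≤ frobSq (Bh - P * Bh) := myFrobNonneg _
  have h := hmin (P * Bh)
  rw [hd1, hd2] at h
  have hc : frobSq (Bh - P * Bh) ≤ 0 := by
    nlinarith [mul_nonneg (mul_nonneg hτ₂.le (sub_nonneg.mpr hα1)) hfn,
      mul_nonneg (mul_nonneg hτ₂.le hα0) (sub_nonneg.mpr hnuc)]
  have hzero : Bh - P * Bh = 0 := myFrobZero hc
  have hBh : Bh = P * Bh := by
    have := sub_eq_zero.mp hzero
    exact this
  rw [hBh, ← Matrix.mul_assoc, hPdef, Pmat_kills, Matrix.zero_mul]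
end
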